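/- Let G be a finite simple graph on n vertices, let d = rk(G), let p = (p_1, …, p_n) be a max-rank vector coloring of G with p_i ∈ ℝ^d, and let P be the n×d matrix whose i-th row is p_i^T. Then a matrix M is the Gram matrix of an optimal vector coloring of G if and only if M = P(I + R)P^T for some symmetric d×d matrix R satisfying: (i) p_i^T R p_i = 0 for all vertices i; (ii) p_i^T R p_j ≤ −1 − p_i^T p_j whenever i ∼ j; and (iii) I + R is positive semidefinite. -/

import Mathlib

open Matrix Kronecker

noncomputable section VectorColoring

variable {V α β : Type*}

/-- A vector `t`-coloring of a graph `G`: vectors `p i` with `p i ⬝ᵥ p i = t - 1`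
and `p i ⬝ᵥ p j ≤ -1` on edges. -/
def IsVecColoring [Fintype V] (G : SimpleGraph V) (t : ℝ) {d : ℕ}
    (p : V → Fin d → ℝ) : Prop :=
  (∀ i, p i ⬝ᵥ p i = t - 1) ∧ ∀ i j, G.Adj i j → p i ⬝ᵥ p j ≤ -1

/-- The vector chromatic number: the least `t ≥ 1` admitting a vector `t`-coloring. -/
def vecChrom [Fintype V] (G : SimpleGraph V) : ℝ :=
  sInf {t : ℝ | 1 ≤ t ∧ ∃ (d : ℕ) (p : V → Fin d → ℝ), IsVecColoring G t p}

/-- A strict vector `t`-coloring: `p i ⬝ᵥ p j = -1` on edges. -/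
def IsStrictVecColoring [Fintype V] (G : SimpleGraph V) (t : ℝ) {d : ℕ}
    (p : V → Fin d → ℝ) : Prop :=
  (∀ i, p i ⬝ᵥ p i = t - 1) ∧ ∀ i j, G.Adj i j → p i ⬝ᵥ p j = -1

/-- The strict vector chromatic number. -/
def strictVecChrom [Fintype V] (G : SimpleGraph V) : ℝ :=
  sInf {t : ℝ | 1 ≤ t ∧ ∃ (d : ℕ) (p : V → Fin d → ℝ), IsStrictVecColoring G t p}

/-- The Gram matrix of a family of vectors. -/
def gramMat {d : ℕ} (p : V → Fin d → ℝ) : Matrix V V ℝ :=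
  Matrix.of fun i j => p i ⬝ᵥ p j

/-- `M` is the Gram matrix of an optimal vector coloring of `G`. -/
def IsOptGram [Fintype V] (G : SimpleGraph V) (M : Matrix V V ℝ) : Prop :=
  ∃ (d : ℕ) (p : V → Fin d → ℝ), IsVecColoring G (vecChrom G) p ∧ M = gramMat p

/-- `grk G = rk(G)`: the maximum rank of the Gram matrix of an optimal vector coloring. -/
def grk [Fintype V] (G : SimpleGraph V) : ℕ :=
  sSup {r : ℕ | ∃ M : Matrix V V ℝ, IsOptGram G M ∧ M.rank = r}

/-- The categorical (tensor) product of graphs. -/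
def catProd (G : SimpleGraph α) (H : SimpleGraph β) : SimpleGraph (α × β) where
  Adj x y := G.Adj x.1 y.1 ∧ H.Adj x.2 y.2
  symm := by constructor; intro x y hxy; exact ⟨hxy.1.symm, hxy.2.symm⟩
  loopless := by constructor; intro x hx; exact G.loopless.irrefl x.1 hx.1

/-- A feasible dual solution for `vecChrom G`. -/
def IsDualSol [Fintype V] (G : SimpleGraph V) (B : Matrix V V ℝ) : Prop :=
  B.PosSemidef ∧ (∀ i j, i ≠ j → ¬ G.Adj i j → B i j = 0) ∧
    (∀ i j, 0 ≤ B i j) ∧ B.trace = 1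

/-- An optimal dual solution for `vecChrom G`: feasible with objective value `vecChrom G`. -/
def IsOptDual [Fintype V] (G : SimpleGraph V) (B : Matrix V V ℝ) : Prop :=
  IsDualSol G B ∧ (∑ i, ∑ j, B i j) = vecChrom G

/-- The all-ones matrix `J`. -/
def allOnes (γ : Type*) : Matrix γ γ ℝ :=
  Matrix.of fun _ _ => 1

/-- The graph `G(B)` of a (symmetric) matrix `B`: distinct `i, j` adjacent iff `B i j ≠ 0`. -/
def matGraph (B : Matrix V V ℝ) : SimpleGraph V where
  Adj i j := i ≠ j ∧ B i j ≠ 0 ∧ B j i ≠ 0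
  symm := by constructor; intro i j hij; exact ⟨hij.1.symm, hij.2.2, hij.2.1⟩
  loopless := by constructor; intro i hi; exact hi.1 rfl

/-- The spanning subgraph `G^p` of edges tight in the vector coloring `p`. -/
def tightSub [Fintype V] (G : SimpleGraph V) {d : ℕ} (p : V → Fin d → ℝ) :
    SimpleGraph V where
  Adj i j := G.Adj i j ∧ p i ⬝ᵥ p j = -1
  symm := by
    constructor
    intro i j hij
    exact ⟨hij.1.symm, by rw [_root_.dotProduct_comm]; exact hij.2⟩
  loopless := by constructor; intro i hi; exact G.loopless.irrefl i hi.1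

/-- The skeleton `G^sk`: the spanning subgraph of edges tight in every optimal
vector coloring. -/
def skeleton [Fintype V] (G : SimpleGraph V) : SimpleGraph V where
  Adj i j := G.Adj i j ∧ ∀ (d : ℕ) (p : V → Fin d → ℝ),
      IsVecColoring G (vecChrom G) p → p i ⬝ᵥ p j = -1
  symm := by
    constructor
    intro i j hij
    refine ⟨hij.1.symm, fun d p hp => ?_⟩
    rw [_root_.dotProduct_comm]
    exact hij.2 d p hp
  loopless := by constructor; intro i hi; exact G.loopless.irrefl i hi.1

/-- `i` is neighborly in the vector coloring `p`: `-p i` lies in the conical hull of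
the vectors of the `∼_p`-neighbours of `i`. -/
def NeighborlyIn [Fintype V] (G : SimpleGraph V) {d : ℕ} (p : V → Fin d → ℝ)
    (i : V) : Prop :=
  ∃ c : V → ℝ, (∀ j, 0 ≤ c j) ∧ (∀ j, c j ≠ 0 → G.Adj i j ∧ p i ⬝ᵥ p j = -1) ∧
    -p i = ∑ j, c j • p j

/-- `i` is neighborly: neighborly in every optimal vector coloring. -/
def Neighborly [Fintype V] (G : SimpleGraph V) (i : V) : Prop :=
  ∀ (d : ℕ) (p : V → Fin d → ℝ), IsVecColoring G (vecChrom G) p → NeighborlyIn G p i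

/-- `i →_p j`: `-p i = ∑ α_l • p l` over `∼_p`-neighbours `l` of `i`, with `α_j > 0`. -/
def ArrowIn [Fintype V] (G : SimpleGraph V) {d : ℕ} (p : V → Fin d → ℝ)
    (i j : V) : Prop :=
  ∃ c : V → ℝ, (∀ l, 0 ≤ c l) ∧ (∀ l, c l ≠ 0 → G.Adj i l ∧ p i ⬝ᵥ p l = -1) ∧
    0 < c j ∧ -p i = ∑ l, c l • p l

/-- `μ` is an eigenvalue of `M`. -/
def IsEigenvalue [Fintype V] (M : Matrix V V ℝ) (μ : ℝ) : Prop :=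
  ∃ v : V → ℝ, v ≠ 0 ∧ M *ᵥ v = μ • v

/-- `lam` is the largest eigenvalue of `M`. -/
def IsMaxEigenvalue [Fintype V] (M : Matrix V V ℝ) (lam : ℝ) : Prop :=
  IsGreatest {μ : ℝ | IsEigenvalue M μ} lam

/-- `lam` is the smallest eigenvalue of `M`. -/
def IsMinEigenvalue [Fintype V] (M : Matrix V V ℝ) (lam : ℝ) : Prop :=
  IsLeast {μ : ℝ | IsEigenvalue M μ} lam

/-- The eigenspace of `M` for `μ`. -/
def eigSpace [Fintype V] (M : Matrix V V ℝ) (μ : ℝ) : Submodule ℝ (V → ℝ) :=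
  LinearMap.ker (M.mulVecLin - μ • (LinearMap.id : (V → ℝ) →ₗ[ℝ] V → ℝ))

/-- `W` is (the Gram matrix of) a convex combination of vector colorings of `G × H`
induced by `G` and by `H`: `W = a • (M ⊗ J) + b • (J ⊗ N)`. -/
def IsConvexCombInduced [Fintype α] [Fintype β] (G : SimpleGraph α) (H : SimpleGraph β)
    (W : Matrix (α × β) (α × β) ℝ) : Prop :=
  ∃ (a b : ℝ) (M : Matrix α α ℝ) (N : Matrix β β ℝ),
    0 ≤ a ∧ 0 ≤ b ∧ a + b = 1 ∧ IsOptGram G M ∧ IsOptGram H N ∧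
    W = a • (M ⊗ₖ allOnes β) + b • (allOnes α ⊗ₖ N)

end VectorColoring

/-! If `q` is another optimal vector coloring, the family `i ↦ (p i, q i) / √2` is an optimal
coloring whose Gram matrix is the average of those of `p` and `q`. Its kernel lies in both of
their kernels, and since `p` has maximal rank it equals `ker (gramMat p)`. So
`ker (gramMat p) ⊆ ker (gramMat q)`, i.e. `q i = X p i` for a matrix `X`, and then
`gramMat q = P (XᵀX) Pᵀ` with `R = XᵀX - 1`. Conversely, writing `1 + R = XᵀX` turns
`i ↦ X p i` into an optimal coloring with Gram matrix `P (1 + R) Pᵀ`. -/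

theorem LinearMap.exists_comp_eq_of_ker_le {K E F G : Type*} [Field K] [AddCommGroup E]
    [Module K E] [AddCommGroup F] [Module K F] [AddCommGroup G] [Module K G]
    (f : E →ₗ[K] F) (g : E →ₗ[K] G) (h : LinearMap.ker f ≤ LinearMap.ker g) :
    ∃ φ : F →ₗ[K] G, φ ∘ₗ f = g := by
  obtain ⟨φ, hφ⟩ := LinearMap.exists_extend
    ((LinearMap.ker f).liftQ g h ∘ₗ f.quotKerEquivRange.symm.toLinearMap)
  refine ⟨φ, LinearMap.ext fun x => ?_⟩
  simpa [LinearMap.quotKerEquivRange_symm_apply_image] using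
    LinearMap.congr_fun hφ ⟨f x, LinearMap.mem_range_self f x⟩

namespace Matrix

variable {K l m n : Type*} [Field K] [Fintype n]

theorem exists_mul_eq_of_ker_le [Fintype m] (A : Matrix m n K) (B : Matrix l n K)
    (h : LinearMap.ker A.mulVecLin ≤ LinearMap.ker B.mulVecLin) :
    ∃ X : Matrix l m K, X * A = B := by
  classical
  obtain ⟨φ, hφ⟩ := LinearMap.exists_comp_eq_of_ker_le _ _ h
  exact ⟨LinearMap.toMatrix' φ, toLin'.injective (by rw [toLin'_mul, toLin'_toMatrix']; exact hφ)⟩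

theorem ker_eq_of_le_of_rank_le {A : Matrix m n K} {B : Matrix l n K}
    (h : LinearMap.ker A.mulVecLin ≤ LinearMap.ker B.mulVecLin) (hr : A.rank ≤ B.rank) :
    LinearMap.ker A.mulVecLin = LinearMap.ker B.mulVecLin := by
  refine Submodule.eq_of_le_of_finrank_le h ?_
  have hA := LinearMap.finrank_range_add_finrank_ker A.mulVecLin
  have hB := LinearMap.finrank_range_add_finrank_ker B.mulVecLin
  unfold rank at hr
  omega

theorem PosSemidef.ker_add_le_left {A B : Matrix n n ℝ} (hA : A.PosSemidef) (hB : B.PosSemidef) :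
    LinearMap.ker (A + B).mulVecLin ≤ LinearMap.ker A.mulVecLin := by
  intro x hx
  have hsum : x ⬝ᵥ A *ᵥ x + x ⬝ᵥ B *ᵥ x = 0 := by
    have hx' : (A + B) *ᵥ x = 0 := hx
    rw [← dotProduct_add, ← add_mulVec, hx', dotProduct_zero]
  have hAx : star x ⬝ᵥ A *ᵥ x = 0 :=
    ((add_eq_zero_iff_of_nonneg (hA.dotProduct_mulVec_nonneg x) (hB.dotProduct_mulVec_nonneg x)).1
      hsum).1
  exact (hA.dotProduct_mulVec_zero_iff x).1 hAx

open scoped MatrixOrder in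
theorem PosSemidef.exists_transpose_mul_self_eq [DecidableEq n] {S : Matrix n n ℝ}
    (hS : S.PosSemidef) : ∃ X : Matrix n n ℝ, Xᵀ * X = S := by
  obtain ⟨X, hX⟩ := CStarAlgebra.nonneg_iff_eq_star_mul_self.mp hS.nonneg
  exact ⟨X, by simpa [star_eq_conjTranspose] using hX.symm⟩

theorem mulVec_dotProduct_mulVec [Fintype m] (X : Matrix m n ℝ) (u v : n → ℝ) :
    X *ᵥ u ⬝ᵥ X *ᵥ v = u ⬝ᵥ (Xᵀ * X) *ᵥ v := by
  rw [← mulVec_mulVec, dotProduct_mulVec u, vecMul_transpose]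

theorem of_mul_mul_transpose_of (p : l → n → ℝ) (S : Matrix n n ℝ) :
    of p * S * (of p)ᵀ = of fun i j => p i ⬝ᵥ S *ᵥ p j := by
  ext i j
  simp only [mul_apply, of_apply, transpose_apply, dotProduct, mulVec, Finset.sum_mul,
    Finset.mul_sum]
  rw [Finset.sum_comm]
  exact Finset.sum_congr rfl fun _ _ => Finset.sum_congr rfl fun _ _ => by ring

end Matrix

section VectorColoring

variable {V : Type*} {d e : ℕ}

theorem gramMat_mulVec (X : Matrix (Fin e) (Fin d) ℝ) (p : V → Fin d → ℝ) :
    gramMat (fun i => X *ᵥ p i) = of p * (Xᵀ * X) * (of p)ᵀ := by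
  rw [of_mul_mul_transpose_of]
  ext i j
  exact mulVec_dotProduct_mulVec X (p i) (p j)

theorem dotProduct_finAppend (u u' : Fin d → ℝ) (v v' : Fin e → ℝ) :
    Fin.append u v ⬝ᵥ Fin.append u' v' = u ⬝ᵥ u' + v ⬝ᵥ v' := by
  simp [dotProduct, Fin.sum_univ_add]

noncomputable def midpointFamily (p : V → Fin d → ℝ) (q : V → Fin e → ℝ) :
    V → Fin (d + e) → ℝ :=
  fun i => √2⁻¹ • Fin.append (p i) (q i)

theorem dotProduct_midpointFamily (p : V → Fin d → ℝ) (q : V → Fin e → ℝ) (i j : V) :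
    midpointFamily p q i ⬝ᵥ midpointFamily p q j = 2⁻¹ * (p i ⬝ᵥ p j + q i ⬝ᵥ q j) := by
  rw [midpointFamily, midpointFamily, smul_dotProduct, dotProduct_smul, dotProduct_finAppend,
    smul_eq_mul, smul_eq_mul, ← mul_assoc, Real.mul_self_sqrt (by norm_num)]

theorem gramMat_midpointFamily (p : V → Fin d → ℝ) (q : V → Fin e → ℝ) :
    gramMat (midpointFamily p q) = (2⁻¹ : ℝ) • (gramMat p + gramMat q) := by
  ext i j
  exact dotProduct_midpointFamily p q i j

theorem gramMat_eq_mul_transpose (p : V → Fin d → ℝ) : gramMat p = of p * (of p)ᵀ := by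
  simpa [gramMat] using (of_mul_mul_transpose_of p 1).symm

variable [Fintype V]

theorem posSemidef_gramMat (p : V → Fin d → ℝ) : (gramMat p).PosSemidef := by
  simpa [gramMat_eq_mul_transpose] using posSemidef_self_mul_conjTranspose (of p)

theorem ker_gramMat (p : V → Fin d → ℝ) :
    LinearMap.ker (gramMat p).mulVecLin = LinearMap.ker (of p)ᵀ.mulVecLin := by
  simpa [gramMat_eq_mul_transpose] using ker_mulVecLin_transpose_mul_self (of p)ᵀ

theorem IsVecColoring.midpointFamily {G : SimpleGraph V} {t : ℝ} {p : V → Fin d → ℝ}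
    {q : V → Fin e → ℝ} (hp : IsVecColoring G t p) (hq : IsVecColoring G t q) :
    IsVecColoring G t (midpointFamily p q) := by
  refine ⟨fun i => ?_, fun i j hij => ?_⟩
  · rw [dotProduct_midpointFamily, hp.1, hq.1]
    ring
  · rw [dotProduct_midpointFamily]
    linarith [hp.2 i j hij, hq.2 i j hij]

theorem IsOptGram.rank_le_grk {G : SimpleGraph V} {M : Matrix V V ℝ} (hM : IsOptGram G M) :
    M.rank ≤ grk G :=
  le_csSup ⟨Fintype.card V, by rintro _ ⟨N, -, rfl⟩; exact rank_le_card_height N⟩ ⟨M, hM, rfl⟩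

theorem ker_gramMat_le_of_rank_eq_grk {G : SimpleGraph V} {p : V → Fin d → ℝ}
    {q : V → Fin e → ℝ} (hp : IsVecColoring G (vecChrom G) p) (hrk : (gramMat p).rank = grk G)
    (hq : IsVecColoring G (vecChrom G) q) :
    LinearMap.ker (gramMat p).mulVecLin ≤ LinearMap.ker (gramMat q).mulVecLin := by
  set N := gramMat (midpointFamily p q) with hNdef
  have hN : LinearMap.ker N.mulVecLin = LinearMap.ker (gramMat p + gramMat q).mulVecLin := by
    have hlin : N.mulVecLin = (2⁻¹ : ℝ) • (gramMat p + gramMat q).mulVecLin :=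
      LinearMap.ext fun x => by simp [hNdef, gramMat_midpointFamily]
    rw [hlin, LinearMap.ker_smul _ _ (by norm_num)]
  have hNp : LinearMap.ker N.mulVecLin ≤ LinearMap.ker (gramMat p).mulVecLin :=
    hN ▸ (posSemidef_gramMat p).ker_add_le_left (posSemidef_gramMat q)
  have hNq : LinearMap.ker N.mulVecLin ≤ LinearMap.ker (gramMat q).mulVecLin := by
    rw [hN, add_comm]
    exact (posSemidef_gramMat q).ker_add_le_left (posSemidef_gramMat p)
  have hrank : N.rank ≤ (gramMat p).rank :=
    hrk ▸ IsOptGram.rank_le_grk ⟨_, _, hp.midpointFamily hq, rfl⟩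
  exact ker_eq_of_le_of_rank_le hNp hrank ▸ hNq

theorem exists_mulVec_eq_of_ker_gramMat_le {p : V → Fin d → ℝ} {q : V → Fin e → ℝ}
    (h : LinearMap.ker (gramMat p).mulVecLin ≤ LinearMap.ker (gramMat q).mulVecLin) :
    ∃ X : Matrix (Fin e) (Fin d) ℝ, q = fun i => X *ᵥ p i := by
  rw [ker_gramMat, ker_gramMat] at h
  obtain ⟨X, hX⟩ := exists_mul_eq_of_ker_le _ _ h
  refine ⟨X, funext fun i => funext fun k => ?_⟩
  simpa [mul_apply, mulVec, dotProduct, mul_comm] using (congr_fun (congr_fun hX k) i).symm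

end VectorColoring

theorem optGram_characterization_general {V : Type*} [Fintype V]
    (G : SimpleGraph V) (p : V → Fin (grk G) → ℝ)
    (hp : IsVecColoring G (vecChrom G) p) (hrk : (gramMat p).rank = grk G)
    (M : Matrix V V ℝ) :
    IsOptGram G M ↔
      ∃ R : Matrix (Fin (grk G)) (Fin (grk G)) ℝ, R.IsSymm ∧
        (∀ i, p i ⬝ᵥ (R *ᵥ p i) = 0) ∧
        (∀ i j, G.Adj i j → p i ⬝ᵥ (R *ᵥ p j) ≤ -1 - p i ⬝ᵥ p j) ∧
        (1 + R).PosSemidef ∧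
        M = (Matrix.of fun i k => p i k) * (1 + R) * (Matrix.of fun i k => p i k)ᵀ := by
  constructor
  · rintro ⟨e, q, hq, rfl⟩
    obtain ⟨X, rfl⟩ :=
      exists_mulVec_eq_of_ker_gramMat_le (ker_gramMat_le_of_rank_eq_grk hp hrk hq)
    have hR : ∀ i j, p i ⬝ᵥ (Xᵀ * X - 1) *ᵥ p j = X *ᵥ p i ⬝ᵥ X *ᵥ p j - p i ⬝ᵥ p j :=
      fun i j => by rw [sub_mulVec, dotProduct_sub, one_mulVec, mulVec_dotProduct_mulVec]
    refine ⟨Xᵀ * X - 1, by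
      rw [IsSymm, transpose_sub, transpose_mul, transpose_transpose, transpose_one], fun i => ?_,
      fun i j hij => ?_, ?_, ?_⟩
    · rw [hR, hq.1, hp.1, sub_self]
    · rw [hR]
      linarith [hq.2 i j hij]
    · simpa using posSemidef_conjTranspose_mul_self X
    · rw [add_sub_cancel, gramMat_mulVec]
  · rintro ⟨R, -, hdiag, hedge, hpsd, rfl⟩
    obtain ⟨X, hX⟩ := hpsd.exists_transpose_mul_self_eq
    have hq : ∀ i j, X *ᵥ p i ⬝ᵥ X *ᵥ p j = p i ⬝ᵥ p j + p i ⬝ᵥ R *ᵥ p j := fun i j => by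
      rw [mulVec_dotProduct_mulVec, hX, add_mulVec, one_mulVec, dotProduct_add]
    refine ⟨_, fun i => X *ᵥ p i, ⟨fun i => ?_, fun i j hij => ?_⟩, by rw [gramMat_mulVec, hX]⟩
    · rw [hq, hdiag, add_zero, hp.1]
    · rw [hq]
      linarith [hedge i j hij]

/-- Characterization of all optimal vector colorings of `G` in terms of
a max-rank vector coloring `p`: `M` is the Gram matrix of an optimal vector coloring iff
`M = P (I + R) Pᵀ` for a symmetric `R` with `pᵢᵀ R pᵢ = 0`, `pᵢᵀ R pⱼ ≤ -1 - pᵢᵀ pⱼ` on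
edges, and `I + R ⪰ 0`. -/
theorem optGram_characterization {V : Type*} [Fintype V] [DecidableEq V]
    (G : SimpleGraph V) (p : V → Fin (grk G) → ℝ)
    (hp : IsVecColoring G (vecChrom G) p) (hrk : (gramMat p).rank = grk G)
    (M : Matrix V V ℝ) :
    IsOptGram G M ↔
      ∃ R : Matrix (Fin (grk G)) (Fin (grk G)) ℝ, R.IsSymm ∧
        (∀ i, p i ⬝ᵥ (R *ᵥ p i) = 0) ∧
        (∀ i j, G.Adj i j → p i ⬝ᵥ (R *ᵥ p j) ≤ -1 - p i ⬝ᵥ p j) ∧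
        (1 + R).PosSemidef ∧
        M = (Matrix.of fun i k => p i k) * (1 + R) * (Matrix.of fun i k => p i k)ᵀ :=
  optGram_characterization_general G p hp hrk M
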